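/- Annihilation equation on B(1): the Clifford-Gegenbauer polynomial C^α_{t,μ}(M_k) satisfies D_k[C^α_{t,μ}(M_k)] = C(α,t,μ,k) C^{α+1}_{t-1,μ}(M_k), where C(α,t,μ,k) = t(2α + t + μ + 2k) if t is even and C(α,t,μ,k) = (2α + t + 1)(t + μ + 2k - 1) if t is odd. -/

import Mathlib

open scoped BigOperators RealInnerProductSpace
open MeasureTheory

namespace CGDunkl

/-- The underlying Euclidean space `ℝ^m`. -/
abbrev V (m : ℕ) := EuclideanSpace ℝ (Fin m)

/-- The quadratic form `x ↦ -‖x‖²` on `ℝ^m`, whose Clifford algebra is `ℝ_{0,m}`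
(so that `eᵢ eⱼ + eⱼ eᵢ = -2 δᵢⱼ`). -/
noncomputable def Q (m : ℕ) : QuadraticForm ℝ (V m) :=
  - LinearMap.BilinMap.toQuadraticMap (innerₗ (V m))

/-- A (normed) model of the Clifford algebra `ℝ_{0,m}`: an `ℝ`-algebra isomorphism from
the Clifford algebra of `-‖·‖²` on `ℝ^m` to a normed algebra `A`. -/
abbrev CliffordModel (m : ℕ) (A : Type*) [NormedRing A] [NormedAlgebra ℝ A] :=
  CliffordAlgebra (Q m) ≃ₐ[ℝ] A

variable {m : ℕ} {A : Type*} [NormedRing A] [NormedAlgebra ℝ A]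

/-- The Clifford generators `e_j`. -/
noncomputable def ee (F : CliffordModel m A) (j : Fin m) : A :=
  F (CliffordAlgebra.ι (Q m) (EuclideanSpace.single j 1))

/-- The vector variable `x̱ = Σⱼ eⱼ xⱼ`. -/
noncomputable def xv (F : CliffordModel m A) (x : V m) : A :=
  F (CliffordAlgebra.ι (Q m) x)

/-- Clifford conjugation, the anti-involution with `conj eᵢ = -eᵢ`
(the composition of grade reversion and grade involution). -/
noncomputable def cconj (F : CliffordModel m A) (a : A) : A :=
  F (CliffordAlgebra.reverse (CliffordAlgebra.involute (F.symm a)))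

/-- The reflection in the hyperplane orthogonal to `α`. -/
noncomputable def reflect {m : ℕ} (α x : V m) : V m :=
  x - ((2 * ⟪α, x⟫) / ⟪α, α⟫) • α

/-- The data of a (reduced, normalized) root system `R = R₊ ∪ (-R₊)` in `ℝ^m`
together with a nonnegative `G`-invariant multiplicity function `κ`. -/
structure DunklData (m : ℕ) where
  /-- the root system -/
  R : Finset (V m)
  /-- the positive subsystem -/
  Rplus : Finset (V m)
  /-- the multiplicity function -/
  κ : V m → ℝ
  root_ne_zero : ∀ α ∈ R, α ≠ 0
  /-- normalization `⟨α, α⟩ = 2` -/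
  norm_two : ∀ α ∈ R, ⟪α, α⟫ = (2 : ℝ)
  /-- the root system is reduced -/
  reduced : ∀ α ∈ R, ∀ c : ℝ, c • α ∈ R → c = 1 ∨ c = -1
  /-- `R` is preserved by each reflection `r_α`, `α ∈ R` -/
  stable : ∀ α ∈ R, ∀ β ∈ R, reflect α β ∈ R
  /-- `R` is the union of `R₊` and `-R₊` -/
  split : ∀ α : V m, α ∈ R ↔ (α ∈ Rplus ∨ -α ∈ Rplus)
  pos_disjoint : ∀ α ∈ Rplus, -α ∉ Rplus
  /-- the multiplicity function is invariant under the reflection group -/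
  invariant : ∀ α ∈ R, ∀ β ∈ R, κ (reflect α β) = κ β
  nonneg : ∀ α ∈ R, 0 ≤ κ α

/-- `γ = Σ_{α ∈ R₊} κ_α`. -/
noncomputable def gammaK (D : DunklData m) : ℝ := ∑ α ∈ D.Rplus, D.κ α

/-- The Dunkl dimension `μ = m + 2γ`. -/
noncomputable def mu (D : DunklData m) : ℝ := m + 2 * gammaK D

/-- The Dunkl operator `T_i`, acting on functions with values in the Clifford algebra. -/
noncomputable def T (D : DunklData m) (i : Fin m) (f : V m → A) (x : V m) : A :=
  fderiv ℝ f x (EuclideanSpace.single i 1) +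
    ∑ α ∈ D.Rplus, (D.κ α * (α i) / ⟪α, x⟫) • (f x - f (reflect α x))

/-- The Dunkl Dirac operator `D_k = Σⱼ eⱼ T_j`. -/
noncomputable def Dirac (F : CliffordModel m A) (D : DunklData m) (f : V m → A) (x : V m) : A :=
  ∑ j : Fin m, ee F j * T D j f x

/-- The Dunkl Laplacian `Δ_k = Σᵢ Tᵢ²`. -/
noncomputable def Lap (D : DunklData m) (f : V m → A) (x : V m) : A :=
  ∑ i : Fin m, T D i (T D i f) x

/-- The Euler operator `𝔼 = Σᵢ xᵢ ∂_{xᵢ}`. -/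
noncomputable def Euler (f : V m → A) (x : V m) : A := fderiv ℝ f x x

/-- The angular Dunkl Dirac operator (Gamma operator) `Γ_k = D_k x̱ + μ + 𝔼`. -/
noncomputable def Gam (F : CliffordModel m A) (D : DunklData m) (f : V m → A) (x : V m) : A :=
  Dirac F D (fun y => xv F y * f y) x + mu D • f x + Euler f x

/-- The regular set: the complement of the hyperplane arrangement, where the pointwise
formula for the Dunkl operators is valid. -/
def Reg (D : DunklData m) : Set (V m) := {x | ∀ α ∈ D.Rplus, ⟪α, x⟫ ≠ 0}

/-- Left solid inner Dunkl monogenic of order `k`: a smooth function, homogeneous (as a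
polynomial) of degree `k`, with `D_k M = 0`. -/
def IsInner (F : CliffordModel m A) (D : DunklData m) (k : ℕ) (M : V m → A) : Prop :=
  ContDiff ℝ (⊤ : ℕ∞) M ∧ (∀ (c : ℝ) (x : V m), M (c • x) = c ^ k • M x) ∧
    ∀ x ∈ Reg D, Dirac F D M x = 0

/-- Left solid outer Dunkl monogenic of order `k`: left Dunkl monogenic on `ℝ^m ∖ {0}` and
homogeneous of degree `-(k + μ - 1)`. -/
def IsOuter (F : CliffordModel m A) (D : DunklData m) (k : ℕ) (Qf : V m → A) : Prop :=
  ContDiffOn ℝ (⊤ : ℕ∞) Qf {x | x ≠ 0} ∧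
    (∀ c : ℝ, 0 < c → ∀ x : V m, x ≠ 0 →
      Qf (c • x) = ((c : ℝ) ^ (-((k : ℝ) + mu D - 1)) : ℝ) • Qf x) ∧
    ∀ x ∈ Reg D, x ≠ 0 → Dirac F D Qf x = 0

/-- The weight function `w_k(x) = Π_{α ∈ R₊} |⟨x, α⟩|^{2 κ_α}`. -/
noncomputable def w (D : DunklData m) (x : V m) : ℝ :=
  ∏ α ∈ D.Rplus, |⟪x, α⟫| ^ (2 * D.κ α)


variable {m : ℕ} {A : Type*} [NormedRing A] [NormedAlgebra ℝ A]

/-- The operator `D_α = (1-|x̱|²) D_k - 2(α+1) x̱` on the unit ball. -/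
noncomputable def Dal (F : CliffordModel m A) (D : DunklData m) (a : ℝ)
    (f : V m → A) (x : V m) : A :=
  (1 - ‖x‖ ^ 2) • Dirac F D f x - (2 * (a + 1)) • (xv F x * f x)

/-- The Clifford-Gegenbauer polynomials on `B(1)`:
`C^α_{t,μ}(M_k) = D_α D_{α+1} ⋯ D_{α+t-1}[M_k]` (with `C^α_{0,μ}(M_k) = M_k`). -/
noncomputable def CG (F : CliffordModel m A) (D : DunklData m) :
    ℝ → ℕ → (V m → A) → (V m → A)
  | _, 0, M => M
  | a, t + 1, M => Dal F D a (CG F D (a + 1) t M)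

/-- The constant `C(α,t,μ,k)` of the annihilation equation:
`t(2α+t+μ+2k)` for even `t` and `(2α+t+1)(t+μ+2k-1)` for odd `t`. -/
noncomputable def Cconst (a : ℝ) (t : ℕ) (mu : ℝ) (k : ℕ) : ℝ :=
  if Even t then t * (2 * a + t + mu + 2 * k)
  else (2 * a + t + 1) * (t + mu + 2 * k - 1)

section Aux
variable {m : ℕ} {A : Type*} [NormedRing A] [NormedAlgebra ℝ A]

lemma Q_apply (x : V m) : Q m x = -‖x‖ ^ 2 := by
  have h : Q m x = -⟪x, x⟫ := rfl
  rw [h, real_inner_self_eq_norm_sq]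

lemma xv_mul_xv (F : CliffordModel m A) (x : V m) :
    xv F x * xv F x = algebraMap ℝ A (-‖x‖ ^ 2) := by
  rw [xv, ← map_mul, CliffordAlgebra.ι_sq_scalar, AlgEquiv.commutes, Q_apply]

lemma xv_anticomm (F : CliffordModel m A) (u v : V m) :
    xv F u * xv F v + xv F v * xv F u = algebraMap ℝ A (-(2 * ⟪u, v⟫)) := by
  rw [xv, xv, ← map_mul F, ← map_mul F, ← map_add F, CliffordAlgebra.ι_mul_ι_add_swap,
    AlgEquiv.commutes]
  congr 1
  simp only [QuadraticMap.polar, Q_apply]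
  have : ‖u + v‖ ^ 2 = ‖u‖ ^ 2 + 2 * ⟪u, v⟫ + ‖v‖ ^ 2 := by
    rw [← real_inner_self_eq_norm_sq, ← real_inner_self_eq_norm_sq, ← real_inner_self_eq_norm_sq,
      real_inner_add_add_self]
    try ring
  rw [this]; try ring

lemma ee_eq_xv (F : CliffordModel m A) (i : Fin m) :
    ee F i = xv F (EuclideanSpace.single i 1) := rfl

lemma ee_mul_ee (F : CliffordModel m A) (i : Fin m) :
    ee F i * ee F i = algebraMap ℝ A (-1) := by
  rw [ee_eq_xv, xv_mul_xv]
  norm_num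

lemma euclid_decomp (x : V m) :
    ∑ i, x i • EuclideanSpace.single i (1 : ℝ) = x := by
  ext j
  have : (∑ i, x i • EuclideanSpace.single i (1 : ℝ)) j
      = ∑ i, x i * (EuclideanSpace.single i (1 : ℝ)) j := by
    rw [WithLp.ofLp_sum, Finset.sum_apply]
    simp [PiLp.smul_apply]
  rw [this]
  simp [EuclideanSpace.single_apply]

lemma xv_add (F : CliffordModel m A) (u v : V m) : xv F (u + v) = xv F u + xv F v := by
  simp [xv]

lemma xv_sub (F : CliffordModel m A) (u v : V m) : xv F (u - v) = xv F u - xv F v := by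
  simp [xv]

lemma xv_smul (F : CliffordModel m A) (c : ℝ) (u : V m) : xv F (c • u) = c • xv F u := by
  simp [xv]

lemma xv_eq_sum (F : CliffordModel m A) (x : V m) :
    xv F x = ∑ i, x i • ee F i := by
  conv_lhs => rw [← euclid_decomp x]
  rw [xv]
  rw [map_sum, map_sum]
  apply Finset.sum_congr rfl
  intro i _
  rw [_root_.map_smul, _root_.map_smul]
  rfl

lemma inner_single_left' (i : Fin m) (x : V m) :
    ⟪EuclideanSpace.single i (1 : ℝ), x⟫ = x i := by
  rw [real_inner_comm]
  simp [EuclideanSpace.inner_single_right]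

lemma inner_eq_sum (u x : V m) : ⟪u, x⟫ = ∑ i, u i * x i := by
  simp [PiLp.inner_apply]
  exact Finset.sum_congr rfl fun _ _ => mul_comm _ _

lemma mem_R_of_Rplus (D : DunklData m) {α : V m} (h : α ∈ D.Rplus) : α ∈ D.R :=
  (D.split α).mpr (Or.inl h)

lemma norm_two_Rplus (D : DunklData m) {α : V m} (h : α ∈ D.Rplus) : ⟪α, α⟫ = (2 : ℝ) :=
  D.norm_two α (mem_R_of_Rplus D h)

lemma reflect_eq (D : DunklData m) {α : V m} (h : α ∈ D.Rplus) (x : V m) :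
    reflect α x = x - ⟪α, x⟫ • α := by
  rw [reflect, norm_two_Rplus D h]
  congr 1
  ring_nf

lemma reflect_inner (D : DunklData m) {α : V m} (h : α ∈ D.Rplus) (β x : V m) :
    ⟪β, reflect α x⟫ = ⟪reflect α β, x⟫ := by
  rw [reflect, reflect]
  simp only [inner_sub_left, inner_sub_right, real_inner_smul_left, real_inner_smul_right]
  rw [real_inner_comm α β]
  ring

lemma reflect_norm_sq (D : DunklData m) {α : V m} (h : α ∈ D.Rplus) (x : V m) :
    ‖reflect α x‖ ^ 2 = ‖x‖ ^ 2 := by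
  rw [← real_inner_self_eq_norm_sq, ← real_inner_self_eq_norm_sq, reflect_eq D h]
  simp only [inner_sub_left, inner_sub_right, real_inner_smul_left, real_inner_smul_right]
  rw [norm_two_Rplus D h, real_inner_comm x α]
  ring

lemma reflect_mem_reg (D : DunklData m) {α : V m} (hα : α ∈ D.Rplus) {x : V m}
    (hx : x ∈ Reg D) : reflect α x ∈ Reg D := by
  intro β hβ
  rw [reflect_inner D hα]
  have hβR : reflect α β ∈ D.R :=
    D.stable α (mem_R_of_Rplus D hα) β (mem_R_of_Rplus D hβ)
  rcases (D.split _).mp hβR with h | h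
  · exact hx _ h
  · intro hc
    apply hx _ h
    rw [inner_neg_left, hc, neg_zero]

lemma reg_open (D : DunklData m) : IsOpen (Reg D) := by
  have : Reg D = ⋂ α ∈ D.Rplus, {x : V m | ⟪α, x⟫ ≠ 0} := by
    ext x
    simp [Reg, Set.mem_iInter]
  rw [this]
  refine Set.Finite.isOpen_biInter (D.Rplus.finite_toSet) fun α _ => ?_
  have hc : Continuous fun x : V m => ⟪α, x⟫ := by
    exact continuous_const.inner continuous_id
  exact isOpen_compl_iff.mpr (isClosed_eq hc continuous_const)

noncomputable def xvL (F : CliffordModel m A) : V m →L[ℝ] A :=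
  LinearMap.toContinuousLinearMap
    ((F.toAlgHom.toLinearMap).comp (CliffordAlgebra.ι (Q m)))

lemma xvL_apply (F : CliffordModel m A) (y : V m) : xvL F y = xv F y := rfl

lemma hasFDerivAt_xv (F : CliffordModel m A) (x : V m) :
    HasFDerivAt (fun y : V m => xv F y) (xvL F) x :=
  (xvL F).hasFDerivAt

lemma hasFDerivAt_poly_normsq (P : Polynomial ℝ) (x : V m) :
    HasFDerivAt (fun y : V m => P.eval (‖y‖ ^ 2))
      ((P.derivative.eval (‖x‖ ^ 2)) • (2 • (innerSL ℝ x) : V m →L[ℝ] ℝ)) x := by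
  have h1 : HasFDerivAt (fun y : V m => ‖y‖ ^ 2) (2 • (innerSL ℝ x) : V m →L[ℝ] ℝ) x :=
    (hasStrictFDerivAt_norm_sq x).hasFDerivAt
  exact (P.hasDerivAt (‖x‖ ^ 2)).comp_hasFDerivAt x h1

lemma poly_normsq_deriv_apply (P : Polynomial ℝ) (x v : V m) :
    ((P.derivative.eval (‖x‖ ^ 2)) • (2 • (innerSL ℝ x) : V m →L[ℝ] ℝ)) v
      = P.derivative.eval (‖x‖ ^ 2) * (2 * ⟪x, v⟫) := by
  simp [two_smul]
  ring

lemma T_congr (D : DunklData m) (i : Fin m) {f g : V m → A} {x : V m}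
    (hfg : f =ᶠ[nhds x] g)
    (hrefl : ∀ α ∈ D.Rplus, f (reflect α x) = g (reflect α x)) :
    T D i f x = T D i g x := by
  unfold T
  rw [hfg.fderiv_eq, hfg.eq_of_nhds]
  congr 1
  exact Finset.sum_congr rfl fun α hα => by rw [hrefl α hα]

lemma Dirac_congr (F : CliffordModel m A) (D : DunklData m) {f g : V m → A} {x : V m}
    (hfg : f =ᶠ[nhds x] g)
    (hrefl : ∀ α ∈ D.Rplus, f (reflect α x) = g (reflect α x)) :
    Dirac F D f x = Dirac F D g x := by
  unfold Dirac
  exact Finset.sum_congr rfl fun j _ => by rw [T_congr D j hfg hrefl]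

lemma T_add (D : DunklData m) (i : Fin m) {f g : V m → A} {f' g' : V m →L[ℝ] A} {x : V m}
    (hf : HasFDerivAt f f' x) (hg : HasFDerivAt g g' x) :
    T D i (fun y => f y + g y) x = T D i f x + T D i g x := by
  unfold T
  rw [(hf.fun_add hg).fderiv, hf.fderiv, hg.fderiv]
  rw [ContinuousLinearMap.add_apply]
  rw [show (∑ α ∈ D.Rplus, (D.κ α * (α i) / ⟪α, x⟫) •
      ((f x + g x) - (f (reflect α x) + g (reflect α x))))
    = ∑ α ∈ D.Rplus, ((D.κ α * (α i) / ⟪α, x⟫) • (f x - f (reflect α x))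
        + (D.κ α * (α i) / ⟪α, x⟫) • (g x - g (reflect α x))) from
    Finset.sum_congr rfl fun α _ => by rw [← smul_add]; congr 1; abel]
  rw [Finset.sum_add_distrib]
  abel

lemma Dirac_add (F : CliffordModel m A) (D : DunklData m) {f g : V m → A}
    {f' g' : V m →L[ℝ] A} {x : V m}
    (hf : HasFDerivAt f f' x) (hg : HasFDerivAt g g' x) :
    Dirac F D (fun y => f y + g y) x = Dirac F D f x + Dirac F D g x := by
  unfold Dirac
  rw [← Finset.sum_add_distrib]
  exact Finset.sum_congr rfl fun j _ => by rw [T_add D j hf hg, mul_add]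

lemma T_radial_smul (D : DunklData m) {g : V m → ℝ} {g' : V m →L[ℝ] ℝ}
    {f : V m → A} {f' : V m →L[ℝ] A} {x : V m}
    (hg : HasFDerivAt g g' x) (hf : HasFDerivAt f f' x)
    (hinv : ∀ α ∈ D.Rplus, g (reflect α x) = g x) (i : Fin m) :
    T D i (fun y => g y • f y) x
      = g' (EuclideanSpace.single i 1) • f x + g x • T D i f x := by
  unfold T
  rw [(hg.fun_smul hf).fderiv, hf.fderiv]
  rw [show ∑ α ∈ D.Rplus, (D.κ α * (α i) / ⟪α, x⟫) •
        (g x • f x - g (reflect α x) • f (reflect α x))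
      = g x • ∑ α ∈ D.Rplus, (D.κ α * (α i) / ⟪α, x⟫) • (f x - f (reflect α x)) by
    rw [Finset.smul_sum]
    refine Finset.sum_congr rfl fun α hα => ?_
    rw [hinv α hα, ← smul_sub, smul_comm]]
  rw [ContinuousLinearMap.add_apply, ContinuousLinearMap.smul_apply,
    ContinuousLinearMap.smulRight_apply, smul_add]
  abel

lemma Dirac_radial_smul (F : CliffordModel m A) (D : DunklData m)
    {g : V m → ℝ} {g' : V m →L[ℝ] ℝ} {f : V m → A} {f' : V m →L[ℝ] A} {x : V m}
    (hg : HasFDerivAt g g' x) (hf : HasFDerivAt f f' x)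
    (hinv : ∀ α ∈ D.Rplus, g (reflect α x) = g x) :
    Dirac F D (fun y => g y • f y) x
      = (∑ i, g' (EuclideanSpace.single i 1) • ee F i) * f x
        + g x • Dirac F D f x := by
  unfold Dirac
  rw [Finset.sum_mul, Finset.smul_sum, ← Finset.sum_add_distrib]
  refine Finset.sum_congr rfl fun j _ => ?_
  rw [T_radial_smul D hg hf hinv j, mul_add, mul_smul_comm, mul_smul_comm, smul_mul_assoc]

lemma Dirac_poly_smul (F : CliffordModel m A) (D : DunklData m) (P : Polynomial ℝ)
    {f : V m → A} {f' : V m →L[ℝ] A} {x : V m} (hf : HasFDerivAt f f' x) :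
    Dirac F D (fun y => P.eval (‖y‖ ^ 2) • f y) x
      = (2 * P.derivative.eval (‖x‖ ^ 2)) • (xv F x * f x)
        + P.eval (‖x‖ ^ 2) • Dirac F D f x := by
  have hg := hasFDerivAt_poly_normsq P x
  have hinv : ∀ α ∈ D.Rplus, P.eval (‖reflect α x‖ ^ 2) = P.eval (‖x‖ ^ 2) :=
    fun α hα => by rw [reflect_norm_sq D hα]
  rw [Dirac_radial_smul F D hg hf hinv]
  congr 1
  rw [show (2 * P.derivative.eval (‖x‖ ^ 2)) • (xv F x * f x)
      = ((2 * P.derivative.eval (‖x‖ ^ 2)) • xv F x) * f x from (smul_mul_assoc _ _ _).symm]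
  congr 1
  rw [xv_eq_sum, Finset.smul_sum]
  refine Finset.sum_congr rfl fun i _ => ?_
  rw [poly_normsq_deriv_apply, smul_smul]
  congr 1
  rw [real_inner_comm, inner_single_left']
  ring

lemma T_xv_mul (F : CliffordModel m A) (D : DunklData m)
    {f : V m → A} {f' : V m →L[ℝ] A} {x : V m} (hx : x ∈ Reg D)
    (hf : HasFDerivAt f f' x) (i : Fin m) :
    T D i (fun y => xv F y * f y) x
      = ee F i * f x + xv F x * T D i f x
        + ∑ α ∈ D.Rplus, (D.κ α * α i) • (xv F α * f (reflect α x)) := by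
  have hxv : HasFDerivAt (fun y : V m => xv F y) (xvL F) x := hasFDerivAt_xv F x
  unfold T
  rw [(hxv.fun_mul' hf).fderiv, hf.fderiv]
  rw [ContinuousLinearMap.add_apply, ContinuousLinearMap.smul_apply,
    ContinuousLinearMap.smul_apply, MulOpposite.smul_eq_mul_unop, MulOpposite.unop_op]
  simp only [smul_eq_mul]
  have hee : xvL F (EuclideanSpace.single i 1) = ee F i := rfl
  rw [hee]
  have hsum : ∑ α ∈ D.Rplus, (D.κ α * (α i) / ⟪α, x⟫) •
        (xv F x * f x - xv F (reflect α x) * f (reflect α x))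
      = xv F x * (∑ α ∈ D.Rplus, (D.κ α * (α i) / ⟪α, x⟫) • (f x - f (reflect α x)))
        + ∑ α ∈ D.Rplus, (D.κ α * α i) • (xv F α * f (reflect α x)) := by
    rw [Finset.mul_sum, ← Finset.sum_add_distrib]
    refine Finset.sum_congr rfl fun α hα => ?_
    have hip : ⟪α, x⟫ ≠ 0 := hx α hα
    have h1 : xv F (reflect α x) = xv F x - ⟪α, x⟫ • xv F α := by
      rw [reflect_eq D hα, xv_sub, xv_smul]
    rw [h1, sub_mul, smul_mul_assoc]
    rw [show xv F x * f x - (xv F x * f (reflect α x) - ⟪α, x⟫ • (xv F α * f (reflect α x)))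
        = xv F x * f x - xv F x * f (reflect α x)
          + ⟪α, x⟫ • (xv F α * f (reflect α x)) from by abel]
    rw [smul_add, smul_smul, ← mul_sub, mul_smul_comm]
    congr 2
    rw [div_mul_cancel₀ _ hip]
  rw [hsum]
  rw [mul_add]
  abel

lemma sum_x_T (D : DunklData m) {f : V m → A} {f' : V m →L[ℝ] A} {x : V m}
    (hx : x ∈ Reg D) (hf : HasFDerivAt f f' x) :
    ∑ j, x j • T D j f x
      = f' x + ∑ α ∈ D.Rplus, D.κ α • (f x - f (reflect α x)) := by
  unfold T
  rw [hf.fderiv]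
  rw [show ∑ j, x j • (f' (EuclideanSpace.single j 1)
        + ∑ α ∈ D.Rplus, (D.κ α * (α j) / ⟪α, x⟫) • (f x - f (reflect α x)))
      = ∑ j, (x j • f' (EuclideanSpace.single j 1)
        + ∑ α ∈ D.Rplus, (x j * (D.κ α * (α j) / ⟪α, x⟫)) • (f x - f (reflect α x))) from
    Finset.sum_congr rfl fun j _ => by
      rw [smul_add, Finset.smul_sum]
      congr 1
      exact Finset.sum_congr rfl fun α _ => by rw [smul_smul]]
  rw [Finset.sum_add_distrib]
  congr 1
  · rw [show ∑ j, x j • f' (EuclideanSpace.single j 1)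
        = f' (∑ j, x j • EuclideanSpace.single j (1:ℝ)) from by
      rw [map_sum]
      exact Finset.sum_congr rfl fun j _ => (f'.map_smul _ _).symm]
    rw [euclid_decomp x]
  · rw [Finset.sum_comm]
    refine Finset.sum_congr rfl fun α hα => ?_
    rw [← Finset.sum_smul]
    congr 1
    have : ∑ j, x j * (D.κ α * (α j) / ⟪α, x⟫)
        = (D.κ α / ⟪α, x⟫) * ∑ j, α j * x j := by
      rw [Finset.mul_sum]
      exact Finset.sum_congr rfl fun j _ => by ring
    rw [this, ← inner_eq_sum]
    exact div_mul_cancel₀ _ (hx α hα)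

lemma Dirac_xv_mul (F : CliffordModel m A) (D : DunklData m)
    {f : V m → A} {f' : V m →L[ℝ] A} {x : V m} (hx : x ∈ Reg D)
    (hf : HasFDerivAt f f' x) :
    Dirac F D (fun y => xv F y * f y) x
      = -(xv F x * Dirac F D f x) - (2 : ℝ) • f' x - mu D • f x := by
  unfold Dirac
  rw [show ∑ j, ee F j * T D j (fun y => xv F y * f y) x
      = ∑ j, (ee F j * (ee F j * f x) + ee F j * (xv F x * T D j f x)
          + ee F j * ∑ α ∈ D.Rplus, (D.κ α * α j) • (xv F α * f (reflect α x))) from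
    Finset.sum_congr rfl fun j _ => by rw [T_xv_mul F D hx hf j, mul_add, mul_add]]
  rw [Finset.sum_add_distrib, Finset.sum_add_distrib]
  have hS1 : ∑ j, ee F j * (ee F j * f x) = (-(m : ℝ)) • f x := by
    rw [show ∑ j, ee F j * (ee F j * f x) = ∑ _j : Fin m, (-1 : ℝ) • f x from
      Finset.sum_congr rfl fun j _ => by
        rw [← mul_assoc, ee_mul_ee, ← Algebra.smul_def]]
    rw [Finset.sum_const, Finset.card_univ, Fintype.card_fin,
      ← Nat.cast_smul_eq_nsmul ℝ, smul_smul]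
    norm_num
  have hS2 : ∑ j, ee F j * (xv F x * T D j f x)
      = -(xv F x * ∑ j, ee F j * T D j f x)
        - (2:ℝ) • (f' x + ∑ α ∈ D.Rplus, D.κ α • (f x - f (reflect α x))) := by
    rw [show ∑ j, ee F j * (xv F x * T D j f x)
        = ∑ j, ((-(2 * x j)) • T D j f x - xv F x * (ee F j * T D j f x)) from
      Finset.sum_congr rfl fun j _ => by
        rw [← mul_assoc]
        have hac : ee F j * xv F x = algebraMap ℝ A (-(2 * x j)) - xv F x * ee F j := by
          have := xv_anticomm F (EuclideanSpace.single j 1) x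
          rw [inner_single_left'] at this
          rw [← ee_eq_xv] at this
          exact eq_sub_of_add_eq this
        rw [hac, sub_mul, ← Algebra.smul_def, mul_assoc]]
    rw [Finset.sum_sub_distrib, ← Finset.mul_sum, ← sum_x_T D hx hf]
    rw [show ∑ j, (-(2 * x j)) • T D j f x = (-2 : ℝ) • ∑ j, x j • T D j f x from by
      rw [Finset.smul_sum]
      exact Finset.sum_congr rfl fun j _ => by rw [smul_smul]; norm_num]
    rw [sum_x_T D hx hf]
    rw [show ((-2 : ℝ)) • (f' x + ∑ α ∈ D.Rplus, D.κ α • (f x - f (reflect α x)))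
        = -((2:ℝ) • (f' x + ∑ α ∈ D.Rplus, D.κ α • (f x - f (reflect α x)))) from by
      rw [← neg_smul]]
    abel
  have hS3 : ∑ j, ee F j * ∑ α ∈ D.Rplus, (D.κ α * α j) • (xv F α * f (reflect α x))
      = ∑ α ∈ D.Rplus, (-(2 * D.κ α)) • f (reflect α x) := by
    rw [show ∑ j, ee F j * ∑ α ∈ D.Rplus, (D.κ α * α j) • (xv F α * f (reflect α x))
        = ∑ j, ∑ α ∈ D.Rplus, D.κ α • (α j • (ee F j * (xv F α * f (reflect α x)))) from
      Finset.sum_congr rfl fun j _ => by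
        rw [Finset.mul_sum]
        exact Finset.sum_congr rfl fun α _ => by
          rw [mul_smul_comm, mul_smul]]
    rw [Finset.sum_comm]
    refine Finset.sum_congr rfl fun α hα => ?_
    rw [← Finset.smul_sum]
    rw [show ∑ j, α j • (ee F j * (xv F α * f (reflect α x)))
        = (∑ j, α j • ee F j) * (xv F α * f (reflect α x)) from by
      rw [Finset.sum_mul]
      exact Finset.sum_congr rfl fun j _ => (smul_mul_assoc _ _ _).symm]
    rw [← xv_eq_sum, ← mul_assoc, xv_mul_xv]
    have hn : ‖α‖ ^ 2 = 2 := by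
      rw [← real_inner_self_eq_norm_sq]; exact norm_two_Rplus D hα
    rw [hn, ← Algebra.smul_def, smul_smul]
    congr 1
    ring
  rw [hS1, hS2, hS3]
  have hgam : -((2:ℝ) • ∑ α ∈ D.Rplus, D.κ α • (f x - f (reflect α x)))
        + ∑ α ∈ D.Rplus, (-(2 * D.κ α)) • f (reflect α x)
      = -((2 * gammaK D) • f x) := by
    rw [← neg_smul, Finset.smul_sum, ← Finset.sum_add_distrib]
    rw [show ∑ α ∈ D.Rplus, ((-2:ℝ) • (D.κ α • (f x - f (reflect α x)))
          + (-(2 * D.κ α)) • f (reflect α x))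
        = ∑ α ∈ D.Rplus, (-(2 * D.κ α)) • f x from
      Finset.sum_congr rfl fun α _ => by
        rw [smul_smul, smul_sub]
        rw [show (-2:ℝ) * D.κ α = -(2 * D.κ α) from by ring]
        abel]
    rw [← Finset.sum_smul, ← neg_smul]
    congr 1
    rw [gammaK, Finset.mul_sum]
    rw [← Finset.sum_neg_distrib]
  have hmu : mu D • f x = (m:ℝ) • f x + (2 * gammaK D) • f x := by
    rw [mu, ← add_smul]
  rw [smul_add, hmu]
  rw [show (-(m:ℝ)) • f x = -((m:ℝ) • f x) from by rw [neg_smul]]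
  calc -((m:ℝ) • f x) + (-(xv F x * ∑ j, ee F j * T D j f x)
          - ((2:ℝ) • f' x + (2:ℝ) • ∑ α ∈ D.Rplus, D.κ α • (f x - f (reflect α x))))
        + ∑ α ∈ D.Rplus, (-(2 * D.κ α)) • f (reflect α x)
      = -((m:ℝ) • f x) + (-(xv F x * ∑ j, ee F j * T D j f x) - (2:ℝ) • f' x)
        + (-((2:ℝ) • ∑ α ∈ D.Rplus, D.κ α • (f x - f (reflect α x)))
            + ∑ α ∈ D.Rplus, (-(2 * D.κ α)) • f (reflect α x)) := by abel
    _ = -((m:ℝ) • f x) + (-(xv F x * ∑ j, ee F j * T D j f x) - (2:ℝ) • f' x)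
        + -((2 * gammaK D) • f x) := by rw [hgam]
    _ = -(xv F x * ∑ j, ee F j * T D j f x) - (2:ℝ) • f' x
        - ((m:ℝ) • f x + (2 * gammaK D) • f x) := by abel

lemma euler_homog {k : ℕ} {M : V m → A} (hsm : ContDiff ℝ (⊤ : ℕ∞) M)
    (hhom : ∀ (c : ℝ) (x : V m), M (c • x) = c ^ k • M x) (x : V m) :
    fderiv ℝ M x x = (k : ℝ) • M x := by
  have hdM : HasFDerivAt M (fderiv ℝ M x) ((1:ℝ) • x) := by
    rw [one_smul]
    exact ((hsm.differentiable (by simp)) x).hasFDerivAt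
  have hs : HasDerivAt (fun c : ℝ => c • x) x 1 := by
    simpa using (hasDerivAt_id (1:ℝ)).smul_const x
  have h1 : HasDerivAt (fun c : ℝ => M (c • x)) (fderiv ℝ M x x) 1 := by
    have := hdM.comp_hasDerivAt 1 hs
    exact this
  have h2 : HasDerivAt (fun c : ℝ => M (c • x)) ((k : ℝ) • M x) 1 := by
    have h3 : HasDerivAt (fun c : ℝ => c ^ k • M x) (((k : ℝ) * 1 ^ (k - 1)) • M x) 1 :=
      (hasDerivAt_pow k 1).smul_const (M x)
    rw [show (fun c : ℝ => M (c • x)) = fun c : ℝ => c ^ k • M x from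
      funext fun c => hhom c x]
    simpa using h3
  exact h1.unique h2

lemma Dirac_xvM (F : CliffordModel m A) (D : DunklData m) {k : ℕ} {M : V m → A}
    (hM : IsInner F D k M) {x : V m} (hx : x ∈ Reg D) :
    Dirac F D (fun y => xv F y * M y) x = (-(2 * (k : ℝ) + mu D)) • M x := by
  have hdM : HasFDerivAt M (fderiv ℝ M x) x := ((hM.1.differentiable (by simp)) x).hasFDerivAt
  rw [Dirac_xv_mul F D hx hdM, hM.2.2 x hx, euler_homog hM.1 hM.2.1 x]
  rw [mul_zero, neg_zero, zero_sub, smul_smul]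
  rw [show -(2 * (k:ℝ) + mu D) = -((2:ℝ) * (k:ℝ)) - mu D from by ring]
  rw [sub_smul, neg_smul]
  try norm_num

lemma Dirac_repr (F : CliffordModel m A) (D : DunklData m) {k : ℕ} {M : V m → A}
    (hM : IsInner F D k M) (P Qp : Polynomial ℝ) {x : V m} (hx : x ∈ Reg D) :
    Dirac F D (fun y => P.eval (‖y‖ ^ 2) • M y + Qp.eval (‖y‖ ^ 2) • (xv F y * M y)) x
      = ((-2 * ‖x‖ ^ 2) * Qp.derivative.eval (‖x‖ ^ 2)
            - (2 * (k : ℝ) + mu D) * Qp.eval (‖x‖ ^ 2)) • M x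
        + (2 * P.derivative.eval (‖x‖ ^ 2)) • (xv F x * M x) := by
  have hdM : HasFDerivAt M (fderiv ℝ M x) x := ((hM.1.differentiable (by simp)) x).hasFDerivAt
  have hxvM : HasFDerivAt (fun y : V m => xv F y * M y)
      (xv F x • fderiv ℝ M x + (xvL F).smulRight (M x)) x :=
    (hasFDerivAt_xv F x).mul' hdM
  have h1 : HasFDerivAt (fun y : V m => P.eval (‖y‖ ^ 2) • M y)
      ((P.eval (‖x‖ ^ 2)) • fderiv ℝ M x
        + ((P.derivative.eval (‖x‖ ^ 2)) • (2 • (innerSL ℝ x) : V m →L[ℝ] ℝ)).smulRight (M x)) x :=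
    (hasFDerivAt_poly_normsq P x).smul hdM
  have h2 : HasFDerivAt (fun y : V m => Qp.eval (‖y‖ ^ 2) • (xv F y * M y))
      ((Qp.eval (‖x‖ ^ 2)) • (xv F x • fderiv ℝ M x + (xvL F).smulRight (M x))
        + ((Qp.derivative.eval (‖x‖ ^ 2)) • (2 • (innerSL ℝ x) : V m →L[ℝ] ℝ)).smulRight
            (xv F x * M x)) x :=
    (hasFDerivAt_poly_normsq Qp x).smul hxvM
  rw [Dirac_add F D h1 h2, Dirac_poly_smul F D P hdM, Dirac_poly_smul F D Qp hxvM]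
  rw [hM.2.2 x hx, Dirac_xvM F D hM hx]
  rw [show xv F x * M x = xv F x * M x from rfl]
  rw [show xv F x * (xv F x * M x) = (-‖x‖ ^ 2) • M x from by
    rw [← mul_assoc, xv_mul_xv, ← Algebra.smul_def]]
  rw [smul_zero, add_zero, smul_smul, smul_smul]
  rw [show ((-2 * ‖x‖ ^ 2) * Qp.derivative.eval (‖x‖ ^ 2)
      - (2 * (k : ℝ) + mu D) * Qp.eval (‖x‖ ^ 2)) • M x
    = ((2 * Qp.derivative.eval (‖x‖ ^ 2)) * (-‖x‖ ^ 2)) • M x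
      + (Qp.eval (‖x‖ ^ 2) * (-(2 * (k : ℝ) + mu D))) • M x from by
    rw [← add_smul]; congr 1; ring]
  abel

open Polynomial in
/-- The coefficient polynomials of the Clifford–Gegenbauer polynomials. -/
noncomputable def PQ (c : ℝ) : ℕ → ℝ → Polynomial ℝ × Polynomial ℝ
  | 0, _ => (1, 0)
  | t+1, a =>
    ((1 - X) * (C (-2) * X * (PQ c t (a+1)).2.derivative - C c * (PQ c t (a+1)).2)
        + C (2*(a+1)) * X * (PQ c t (a+1)).2,
     C 2 * (1 - X) * (PQ c t (a+1)).1.derivative - C (2*(a+1)) * (PQ c t (a+1)).1)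

open Polynomial in
lemma PQ_fst_succ (c : ℝ) (t : ℕ) (a : ℝ) :
    (PQ c (t+1) a).1 = (1 - X) * (C (-2) * X * (PQ c t (a+1)).2.derivative
        - C c * (PQ c t (a+1)).2) + C (2*(a+1)) * X * (PQ c t (a+1)).2 := rfl

open Polynomial in
lemma PQ_snd_succ (c : ℝ) (t : ℕ) (a : ℝ) :
    (PQ c (t+1) a).2 = C 2 * (1 - X) * (PQ c t (a+1)).1.derivative
        - C (2*(a+1)) * (PQ c t (a+1)).1 := rfl

lemma PQ_parity (c : ℝ) : ∀ (t : ℕ) (a : ℝ),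
    (Even t → (PQ c t a).2 = 0) ∧ (¬ Even t → (PQ c t a).1 = 0)
  | 0, a => ⟨fun _ => rfl, fun h => absurd Even.zero h⟩
  | t+1, a => by
    constructor
    · intro h
      have h' : ¬ Even t := by
        rw [Nat.even_add_one] at h
        exact h
      have hz := (PQ_parity c t (a+1)).2 h'
      rw [PQ_snd_succ, hz]
      simp
    · intro h
      have h' : Even t := by
        rw [Nat.even_add_one, not_not] at h
        exact h
      have hz := (PQ_parity c t (a+1)).1 h'
      rw [PQ_fst_succ, hz]
      simp

open Polynomial in
lemma PQ_I2_of_I1 (c : ℝ) (j : ℕ)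
    (h : ∀ a : ℝ, C (-2) * X * ((PQ c (2*j+1) a).2).derivative - C c * (PQ c (2*j+1) a).2
      = C ((2*a+2*(j:ℝ)+2)*(2*(j:ℝ)+c)) * (PQ c (2*j) (a+1)).1) :
    ∀ a : ℝ, C 2 * ((PQ c (2*j+2) a).1).derivative
      = C ((2*(j:ℝ)+2)*(2*a+2*(j:ℝ)+2+c)) * (PQ c (2*j+1) (a+1)).2 := by
  intro a
  have hA := h (a+1)
  have hA' := congrArg derivative hA
  have hB := PQ_snd_succ c (2*j) (a+1)
  rw [show 2*j+2 = (2*j+1)+1 from rfl, PQ_fst_succ]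
  simp only [derivative_add, derivative_mul, derivative_sub, derivative_C, derivative_X,
    derivative_one, zero_mul, mul_one, one_mul, zero_add, add_zero, zero_sub, sub_zero,
    mul_zero, neg_zero] at hA' ⊢
  simp only [map_mul, map_add, map_sub, map_neg, map_ofNat, map_one] at hA hA' hB ⊢
  linear_combination (norm := ring1)
    (-(2*(C a : Polynomial ℝ) + 4)) * hA + (2*(1-X)) * hA'
    + (-((2*(C a + 1) + 2*(C (j:ℝ)) + 2) * (2*(C (j:ℝ)) + C c))) * hB

open Polynomial in
lemma PQ_I1 (c : ℝ) : ∀ (j : ℕ) (a : ℝ),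
    C (-2) * X * ((PQ c (2*j+1) a).2).derivative - C c * (PQ c (2*j+1) a).2
      = C ((2*a+2*(j:ℝ)+2)*(2*(j:ℝ)+c)) * (PQ c (2*j) (a+1)).1 := by
  intro j
  induction j with
  | zero =>
    intro a
    have hQ : (PQ c (2*0+1) a).2 = C (-(2*(a+1))) := by
      rw [show 2*0+1 = 0+1 from rfl, PQ_snd_succ]
      have h1 : (PQ c 0 (a+1)).1 = 1 := rfl
      rw [h1]
      simp
    rw [hQ]
    have h1 : (PQ c (2*0) (a+1)).1 = 1 := rfl
    rw [h1]
    simp only [derivative_C, mul_zero, zero_sub, mul_one, Nat.cast_zero]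
    simp only [map_mul, map_add, map_sub, map_neg, map_ofNat, map_one, map_zero]
    ring1
  | succ j ih =>
    intro a
    have hI2 := PQ_I2_of_I1 c j ih (a+1)
    have hI2' := congrArg derivative hI2
    have hP := PQ_fst_succ c (2*j+1) (a+1)
    rw [show 2*(j+1)+1 = ((2*j+1)+1)+1 from by ring, PQ_snd_succ,
      show (2*(j+1) : ℕ) = (2*j+1)+1 from by ring]
    rw [show (2*j+2 : ℕ) = (2*j+1)+1 from rfl] at hI2 hI2'
    simp only [derivative_add, derivative_mul, derivative_sub, derivative_C, derivative_X,
      derivative_one, zero_mul, mul_one, one_mul, zero_add, add_zero, zero_sub, sub_zero,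
      mul_zero, neg_zero] at hI2' ⊢
    simp only [Nat.cast_add, Nat.cast_one] at hI2 hI2' ⊢
    simp only [map_mul, map_add, map_sub, map_neg, map_ofNat, map_one] at hI2 hI2' hP ⊢
    linear_combination (norm := ring1)
      ((2*(C a : Polynomial ℝ) + 4)*X - C c*(1-X)) * hI2
      + (-(2*X*(1-X))) * hI2'
      + (2*(C c)*(C a + 1) - (2*(C a) + 2*(C (j:ℝ)+1) + 2) * (2*(C (j:ℝ)+1) + C c)) * hP

open Polynomial in
lemma CG_repr (F : CliffordModel m A) (D : DunklData m) {k : ℕ} {M : V m → A}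
    (hM : IsInner F D k M) :
    ∀ (t : ℕ) (a : ℝ), ∀ x ∈ Reg D,
      CG F D a t M x
        = ((PQ (2*(k:ℝ) + mu D) t a).1.eval (‖x‖^2)) • M x
          + ((PQ (2*(k:ℝ) + mu D) t a).2.eval (‖x‖^2)) • (xv F x * M x) := by
  intro t
  induction t with
  | zero =>
    intro a x hx
    show M x = _
    have h1 : (PQ (2*(k:ℝ) + mu D) 0 a).1 = 1 := rfl
    have h2 : (PQ (2*(k:ℝ) + mu D) 0 a).2 = 0 := rfl
    rw [h1, h2]
    simp
  | succ t ih =>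
    intro a x hx
    have hG : ∀ y ∈ Reg D, CG F D (a+1) t M y
        = (PQ (2*(k:ℝ) + mu D) t (a+1)).1.eval (‖y‖^2) • M y
          + (PQ (2*(k:ℝ) + mu D) t (a+1)).2.eval (‖y‖^2) • (xv F y * M y) :=
      fun y hy => ih (a+1) y hy
    have hDir : Dirac F D (CG F D (a+1) t M) x
        = ((-2 * ‖x‖^2) * (PQ (2*(k:ℝ) + mu D) t (a+1)).2.derivative.eval (‖x‖^2)
            - (2*(k:ℝ) + mu D) * (PQ (2*(k:ℝ) + mu D) t (a+1)).2.eval (‖x‖^2)) • M x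
          + (2 * (PQ (2*(k:ℝ) + mu D) t (a+1)).1.derivative.eval (‖x‖^2)) • (xv F x * M x) := by
      rw [Dirac_congr F D (Filter.eventually_of_mem ((reg_open D).mem_nhds hx) hG)
        (fun α hα => hG _ (reflect_mem_reg D hα hx))]
      exact Dirac_repr F D hM _ _ hx
    show Dal F D a (CG F D (a+1) t M) x = _
    rw [Dal, hDir, hG x hx]
    have hxvmul : xv F x * ((PQ (2*(k:ℝ) + mu D) t (a+1)).1.eval (‖x‖^2) • M x
          + (PQ (2*(k:ℝ) + mu D) t (a+1)).2.eval (‖x‖^2) • (xv F x * M x))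
        = (PQ (2*(k:ℝ) + mu D) t (a+1)).1.eval (‖x‖^2) • (xv F x * M x)
          + ((PQ (2*(k:ℝ) + mu D) t (a+1)).2.eval (‖x‖^2) * (-‖x‖^2)) • M x := by
      rw [mul_add, mul_smul_comm, mul_smul_comm, ← mul_assoc, xv_mul_xv, ← Algebra.smul_def,
        smul_smul]
    rw [hxvmul, PQ_fst_succ, PQ_snd_succ]
    simp only [eval_mul, eval_add, eval_sub, eval_C, eval_X, eval_one]
    module

lemma PQ_I2 (c : ℝ) (j : ℕ) : ∀ a : ℝ,
    Polynomial.C 2 * ((PQ c (2*j+2) a).1).derivative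
      = Polynomial.C ((2*(j:ℝ)+2)*(2*a+2*(j:ℝ)+2+c)) * (PQ c (2*j+1) (a+1)).2 :=
  PQ_I2_of_I1 c j (PQ_I1 c j)

end Aux

/-- Annihilation equation on `B(1)`:
`D_k[C^α_{t,μ}(M_k)] = C(α,t,μ,k) C^{α+1}_{t-1,μ}(M_k)`. -/
theorem cg_annihilation
    {m : ℕ} {A : Type*} [NormedRing A] [NormedAlgebra ℝ A]
    (F : CliffordModel m A) (D : DunklData m)
    (k : ℕ) (M : V m → A) (hM : IsInner F D k M)
    (α : ℝ) (hα : -1 < α) (t : ℕ) (ht : 1 ≤ t) :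
    ∀ x ∈ Reg D,
      Dirac F D (CG F D α t M) x =
        Cconst α t (mu D) k • CG F D (α + 1) (t - 1) M x := by
  intro x hx
  have hG : ∀ y ∈ Reg D, CG F D α t M y
      = (PQ (2*(k:ℝ) + mu D) t α).1.eval (‖y‖^2) • M y
        + (PQ (2*(k:ℝ) + mu D) t α).2.eval (‖y‖^2) • (xv F y * M y) :=
    fun y hy => CG_repr F D hM t α y hy
  have hDir : Dirac F D (CG F D α t M) x
      = ((-2 * ‖x‖^2) * (PQ (2*(k:ℝ) + mu D) t α).2.derivative.eval (‖x‖^2)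
          - (2*(k:ℝ) + mu D) * (PQ (2*(k:ℝ) + mu D) t α).2.eval (‖x‖^2)) • M x
        + (2 * (PQ (2*(k:ℝ) + mu D) t α).1.derivative.eval (‖x‖^2)) • (xv F x * M x) := by
    rw [Dirac_congr F D (Filter.eventually_of_mem ((reg_open D).mem_nhds hx) hG)
      (fun β hβ => hG _ (reflect_mem_reg D hβ hx))]
    exact Dirac_repr F D hM _ _ hx
  rw [hDir, CG_repr F D hM (t-1) (α+1) x hx]
  rcases Nat.even_or_odd t with he | ho
  · -- t even, t = 2j+2
    obtain ⟨i, hi⟩ := he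
    have hj : t = 2*(i-1)+2 := by omega
    rw [hj]
    rw [show (2*(i-1)+2) - 1 = 2*(i-1)+1 from rfl]
    set j := i - 1 with hjj
    have hq0 : (PQ (2*(k:ℝ) + mu D) (2*j+2) α).2 = 0 :=
      (PQ_parity _ _ α).1 ⟨j+1, by ring⟩
    have hp1 : (PQ (2*(k:ℝ) + mu D) (2*j+1) (α+1)).1 = 0 :=
      (PQ_parity _ _ (α+1)).2 (Nat.not_even_iff_odd.mpr ⟨j, rfl⟩)
    have hI := congrArg (Polynomial.eval (‖x‖^2)) (PQ_I2 (2*(k:ℝ) + mu D) j α)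
    simp only [Polynomial.eval_mul, Polynomial.eval_C, Polynomial.eval_ofNat] at hI
    have hC : Cconst α (2*j+2) (mu D) k
        = (2*(j:ℝ)+2)*(2*α+2*(j:ℝ)+2+(2*(k:ℝ)+mu D)) := by
      rw [Cconst, if_pos ⟨j+1, by ring⟩]
      push_cast
      ring
    have hscal : 2 * (PQ (2*(k:ℝ) + mu D) (2*j+2) α).1.derivative.eval (‖x‖^2)
        = ((2*(j:ℝ)+2)*(2*α+2*(j:ℝ)+2+(2*(k:ℝ)+mu D)))
            * (PQ (2*(k:ℝ) + mu D) (2*j+1) (α+1)).2.eval (‖x‖^2) := by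
      linear_combination hI
    rw [hq0, hp1, hC, hscal]
    simp only [Polynomial.derivative_zero, Polynomial.eval_zero]
    module
  · -- t odd, t = 2j+1
    obtain ⟨j, hj⟩ := ho
    rw [hj]
    rw [show (2*j+1) - 1 = 2*j from rfl]
    have hp0 : (PQ (2*(k:ℝ) + mu D) (2*j+1) α).1 = 0 :=
      (PQ_parity _ _ α).2 (Nat.not_even_iff_odd.mpr ⟨j, rfl⟩)
    have hq2 : (PQ (2*(k:ℝ) + mu D) (2*j) (α+1)).2 = 0 :=
      (PQ_parity _ _ (α+1)).1 ⟨j, by ring⟩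
    have hI := congrArg (Polynomial.eval (‖x‖^2)) (PQ_I1 (2*(k:ℝ) + mu D) j α)
    simp only [Polynomial.eval_mul, Polynomial.eval_sub, Polynomial.eval_C, Polynomial.eval_X,
      Polynomial.eval_ofNat] at hI
    have hC : Cconst α (2*j+1) (mu D) k
        = (2*α+2*(j:ℝ)+2)*(2*(j:ℝ)+(2*(k:ℝ)+mu D)) := by
      rw [Cconst, if_neg (Nat.not_even_iff_odd.mpr ⟨j, rfl⟩)]
      push_cast
      ring
    have hscal : (-2 * ‖x‖^2) * (PQ (2*(k:ℝ) + mu D) (2*j+1) α).2.derivative.eval (‖x‖^2)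
          - (2*(k:ℝ) + mu D) * (PQ (2*(k:ℝ) + mu D) (2*j+1) α).2.eval (‖x‖^2)
        = ((2*α+2*(j:ℝ)+2)*(2*(j:ℝ)+(2*(k:ℝ)+mu D)))
            * (PQ (2*(k:ℝ) + mu D) (2*j) (α+1)).1.eval (‖x‖^2) := by
      linear_combination hI
    rw [hp0, hq2, hC, hscal]
    simp only [Polynomial.derivative_zero, Polynomial.eval_zero]
    module

end CGDunkl
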